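/- Let p, q ∈ [1, ∞). If there exists an isometric algebra isomorphism between ℂ² equipped with the norm ‖(x,y)‖_p = ‖u·d(x,y)·u⁻¹‖_{B(ℓᵖ(Fin 2))} and ℂ² equipped with the analogous q-norm (where u = (1/√2)·[[1,1],[1,−1]] is the 2×2 Fourier matrix and d(x,y) = diag(x,y)), then |1/p − 1/2| = |1/q − 1/2|. -/

import Mathlib

open Real
open scoped BigOperators

/-- The `ℓᵖ` norm on `ι → ℂ` for a real exponent `p`. -/
noncomputable def pNorm {ι : Type*} [Fintype ι] (p : ℝ) (ξ : ι → ℂ) : ℝ :=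
  (∑ i, ‖ξ i‖ ^ p) ^ (1 / p)

/-- The operator norm of a matrix acting on `ℓᵖ(ι)`. -/
noncomputable def opNormLp {ι : Type*} [Fintype ι] (p : ℝ) (M : Matrix ι ι ℂ) : ℝ :=
  sInf {c : ℝ | 0 ≤ c ∧ ∀ ξ : ι → ℂ, pNorm p (M.mulVec ξ) ≤ c * pNorm p ξ}

/-- The primitive `n`-th root of unity `ω = exp(2πi/n)`. -/
noncomputable def dftOmega (n : ℕ) : ℂ := Complex.exp (2 * π * Complex.I / n)

/-- The `n × n` Fourier matrix, with entries `u_{jk} = ω^{jk} / √n`. -/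
noncomputable def dftMatrix (n : ℕ) [NeZero n] : Matrix (ZMod n) (ZMod n) ℂ :=
  Matrix.of fun j k => dftOmega n ^ (j.val * k.val) / (Real.sqrt n : ℂ)

/-- The norm `‖ξ‖_{F^p(ℤ_n)} = ‖u·d(ξ)·u⁻¹‖_{B(ℓᵖ)}` on `ℂⁿ`. -/
noncomputable def FpNorm (n : ℕ) [NeZero n] (p : ℝ) (ξ : ZMod n → ℂ) : ℝ :=
  opNormLp p (dftMatrix n * Matrix.diagonal ξ * (dftMatrix n)⁻¹)

/-!
For unimodular `ξ` the matrix `u·d(ξ)·u⁻¹` is unitary, so comparing `ℓᵖ` with `ℓ²` on `ℂ²` bounds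
its `ℓᵖ` operator norm by `2^|1/p - 1/2|`. When moreover `|ξ₀ ± ξ₁| = √2`, as for `(1, i)` and
`(i, 1)`, the bound is attained: for `p ≤ 2` at `e₀`, which is sent to a flat vector, and for
`p ≥ 2` at a flat vector sent to a multiple of `e₀`. An algebra automorphism of `ℂ²` fixes or
swaps the two minimal idempotents, hence maps `(1, i)` to `(1, i)` or `(i, 1)`, and the isometry
gives `2^|1/p - 1/2| = 2^|1/q - 1/2|`.
-/

open Matrix

lemma zmod_two_cases : ∀ j : ZMod 2, j = 0 ∨ j = 1 := by decide

lemma sum_zmod_two {M : Type*} [AddCommMonoid M] (f : ZMod 2 → M) : ∑ i, f i = f 0 + f 1 :=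
  Fin.sum_univ_two f

lemma rpow_add_rpow_le_two_rpow_mul_of_add_eq {r a b c d : ℝ} (hr : 0 < r) (ha : 0 ≤ a)
    (hb : 0 ≤ b) (hc : 0 ≤ c) (hd : 0 ≤ d) (h : a + b = c + d) :
    a ^ r + b ^ r ≤ 2 ^ |1 - r| * (c ^ r + d ^ r) := by
  rcases le_total r 1 with hr1 | hr1
  · have hmid := (Real.concaveOn_rpow hr.le hr1).2 ha hb (by norm_num : (0:ℝ) ≤ 1 / 2)
      (by norm_num : (0:ℝ) ≤ 1 / 2) (by norm_num)
    simp only [smul_eq_mul] at hmid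
    rw [← mul_add, ← mul_add, Real.mul_rpow (by norm_num) (by positivity)] at hmid
    rw [abs_of_nonneg (sub_nonneg.2 hr1)]
    calc a ^ r + b ^ r = 2 * (1 / 2 * (a ^ r + b ^ r)) := by ring
      _ ≤ 2 * ((1 / 2) ^ r * (a + b) ^ r) := by gcongr
      _ = 2 ^ (1 - r) * (c + d) ^ r := by
          rw [h, Real.rpow_sub two_pos, Real.rpow_one, Real.div_rpow zero_le_one zero_le_two,
            Real.one_rpow]
          ring
      _ ≤ 2 ^ (1 - r) * (c ^ r + d ^ r) := by
          gcongr; exact Real.rpow_add_le_add_rpow hc hd hr.le hr1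
  · rw [abs_of_nonpos (sub_nonpos.2 hr1), neg_sub]
    calc a ^ r + b ^ r ≤ (a + b) ^ r := Real.add_rpow_le_rpow_add ha hb hr1
      _ = (c + d) ^ r := by rw [h]
      _ ≤ 2 ^ (r - 1) * (c ^ r + d ^ r) := by
          lift c to NNReal using hc
          lift d to NNReal using hd
          exact_mod_cast NNReal.rpow_add_le_mul_rpow_add_rpow c d hr1

lemma pNorm_zmod_two (p : ℝ) (v : ZMod 2 → ℂ) :
    pNorm p v = (‖v 0‖ ^ p + ‖v 1‖ ^ p) ^ (1 / p) := by
  rw [pNorm, sum_zmod_two]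

lemma pNorm_le_two_rpow_mul_of_sq_norm_add_eq {p : ℝ} (hp : 0 < p) {v w : ZMod 2 → ℂ}
    (h : ‖w 0‖ ^ 2 + ‖w 1‖ ^ 2 = ‖v 0‖ ^ 2 + ‖v 1‖ ^ 2) :
    pNorm p w ≤ 2 ^ |1 / p - 1 / 2| * pNorm p v := by
  have hsq (x : ℂ) : (‖x‖ ^ 2) ^ (p / 2) = ‖x‖ ^ p := by
    rw [← Real.rpow_natCast, ← Real.rpow_mul (norm_nonneg x)]
    norm_num [mul_div_cancel₀ p two_ne_zero]
  have hexp : |1 - p / 2| = |1 / p - 1 / 2| * p := by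
    rw [← abs_of_pos hp, ← abs_mul, abs_of_pos hp]; congr 1; field_simp
  have hsum := rpow_add_rpow_le_two_rpow_mul_of_add_eq (half_pos hp) (by positivity)
    (by positivity) (by positivity) (by positivity) h
  rw [hsq, hsq, hsq, hsq, hexp, Real.rpow_mul zero_le_two] at hsum
  rw [pNorm_zmod_two, pNorm_zmod_two,
    ← Real.rpow_rpow_inv (by positivity : (0:ℝ) ≤ 2 ^ |1 / p - 1 / 2|) hp.ne',
    one_div, ← Real.mul_rpow (by positivity) (by positivity)]
  gcongr
  simpa only [one_div] using hsum

lemma pNorm_of_norm_eq {p : ℝ} (hp : 0 < p) {v : ZMod 2 → ℂ} {r : ℝ} (hr : 0 ≤ r)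
    (h0 : ‖v 0‖ = r) (h1 : ‖v 1‖ = r) : pNorm p v = 2 ^ (1 / p) * r := by
  rw [pNorm_zmod_two, h0, h1, ← two_mul, Real.mul_rpow zero_le_two (by positivity),
    ← Real.rpow_mul hr, mul_one_div_cancel hp.ne', Real.rpow_one]

lemma pNorm_single_zero {p : ℝ} (hp : 0 < p) (c : ℂ) :
    pNorm p (Pi.single (0 : ZMod 2) c) = ‖c‖ := by
  rw [pNorm_zmod_two, Pi.single_eq_same, Pi.single_eq_of_ne one_ne_zero, norm_zero,
    Real.zero_rpow hp.ne', add_zero, ← Real.rpow_mul (norm_nonneg _), mul_one_div_cancel hp.ne',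
    Real.rpow_one]

lemma opNormLp_eq_of_le_of_le {ι : Type*} [Fintype ι] {p c : ℝ} {M : Matrix ι ι ℂ} (hc : 0 ≤ c)
    (hle : ∀ v, pNorm p (M *ᵥ v) ≤ c * pNorm p v) {v₀ : ι → ℂ} (hv₀ : 0 < pNorm p v₀)
    (hge : c * pNorm p v₀ ≤ pNorm p (M *ᵥ v₀)) : opNormLp p M = c :=
  le_antisymm (csInf_le ⟨0, fun _ hb => hb.1⟩ ⟨hc, hle⟩)
    (le_csInf ⟨c, hc, hle⟩ fun _ hb => le_of_mul_le_mul_right (hge.trans (hb.2 v₀)) hv₀)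

lemma dftOmega_two : dftOmega 2 = -1 := by
  rw [dftOmega, ← Complex.exp_pi_mul_I]
  push_cast
  ring_nf

lemma dftMatrix_two_apply (j k : ZMod 2) :
    dftMatrix 2 j k = (if j = 1 ∧ k = 1 then -1 else 1) / (√2 : ℂ) := by
  rcases zmod_two_cases j with rfl | rfl <;> rcases zmod_two_cases k with rfl | rfl <;>
    simp [dftMatrix, dftOmega_two, ZMod.val_one]

lemma inv_sqrt_two_mul_self : (√2 : ℂ)⁻¹ * (√2 : ℂ)⁻¹ = 1 / 2 := by
  rw [← mul_inv, ← Complex.ofReal_mul, Real.mul_self_sqrt zero_le_two]; norm_num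

lemma dftMatrix_two_mul_self : dftMatrix 2 * dftMatrix 2 = 1 := by
  ext j k
  rw [mul_apply, sum_zmod_two]
  rcases zmod_two_cases j with rfl | rfl <;> rcases zmod_two_cases k with rfl | rfl <;>
    simp only [dftMatrix_two_apply]
  all_goals field_simp
  all_goals norm_num [← Complex.ofReal_pow]

lemma dftMatrix_two_mulVec_zero (v : ZMod 2 → ℂ) : (dftMatrix 2 *ᵥ v) 0 = (v 0 + v 1) / √2 := by
  simp only [mulVec, dotProduct, sum_zmod_two, dftMatrix_two_apply, zero_ne_one, false_and,
    if_false, one_div]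
  ring

lemma dftMatrix_two_mulVec_one (v : ZMod 2 → ℂ) : (dftMatrix 2 *ᵥ v) 1 = (v 0 - v 1) / √2 := by
  simp only [mulVec, dotProduct, sum_zmod_two, dftMatrix_two_apply, zero_ne_one, true_and,
    if_false, if_true, one_div]
  ring

lemma mulVec_dftMatrix_two_conj_zero (ξ v : ZMod 2 → ℂ) :
    ((dftMatrix 2 * diagonal ξ * (dftMatrix 2)⁻¹) *ᵥ v) 0 =
      (ξ 0 * (v 0 + v 1) + ξ 1 * (v 0 - v 1)) / 2 := by
  rw [inv_eq_right_inv dftMatrix_two_mul_self, ← mulVec_mulVec, ← mulVec_mulVec,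
    dftMatrix_two_mulVec_zero, mulVec_diagonal, mulVec_diagonal, dftMatrix_two_mulVec_zero,
    dftMatrix_two_mulVec_one]
  linear_combination (ξ 0 * (v 0 + v 1) + ξ 1 * (v 0 - v 1)) * inv_sqrt_two_mul_self

lemma mulVec_dftMatrix_two_conj_one (ξ v : ZMod 2 → ℂ) :
    ((dftMatrix 2 * diagonal ξ * (dftMatrix 2)⁻¹) *ᵥ v) 1 =
      (ξ 0 * (v 0 + v 1) - ξ 1 * (v 0 - v 1)) / 2 := by
  rw [inv_eq_right_inv dftMatrix_two_mul_self, ← mulVec_mulVec, ← mulVec_mulVec,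
    dftMatrix_two_mulVec_one, mulVec_diagonal, mulVec_diagonal, dftMatrix_two_mulVec_zero,
    dftMatrix_two_mulVec_one]
  linear_combination (ξ 0 * (v 0 + v 1) - ξ 1 * (v 0 - v 1)) * inv_sqrt_two_mul_self

lemma sq_norm_add_sq_norm_mulVec_dftMatrix_two_conj {ξ : ZMod 2 → ℂ} (h0 : ‖ξ 0‖ = 1)
    (h1 : ‖ξ 1‖ = 1) (v : ZMod 2 → ℂ) :
    ‖((dftMatrix 2 * diagonal ξ * (dftMatrix 2)⁻¹) *ᵥ v) 0‖ ^ 2 +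
      ‖((dftMatrix 2 * diagonal ξ * (dftMatrix 2)⁻¹) *ᵥ v) 1‖ ^ 2 = ‖v 0‖ ^ 2 + ‖v 1‖ ^ 2 := by
  rw [mulVec_dftMatrix_two_conj_zero, mulVec_dftMatrix_two_conj_one, norm_div, norm_div,
    Complex.norm_two]
  have hz := parallelogram_law_with_norm ℝ (ξ 0 * (v 0 + v 1)) (ξ 1 * (v 0 - v 1))
  have hv := parallelogram_law_with_norm ℝ (v 0) (v 1)
  rw [norm_mul, norm_mul, h0, h1, one_mul, one_mul] at hz
  nlinarith [hz, hv]

lemma pNorm_mulVec_dftMatrix_two_conj_single {p : ℝ} (hp : 0 < p) {ξ : ZMod 2 → ℂ}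
    (hs : ‖ξ 0 + ξ 1‖ = √2) (hd : ‖ξ 0 - ξ 1‖ = √2) :
    pNorm p ((dftMatrix 2 * diagonal ξ * (dftMatrix 2)⁻¹) *ᵥ Pi.single 0 1) =
      2 ^ (1 / p - 1 / 2) := by
  rw [pNorm_of_norm_eq hp (r := 1 / √2) (by positivity), Real.rpow_sub two_pos,
    ← Real.sqrt_eq_rpow, mul_one_div]
  · simp [mulVec_dftMatrix_two_conj_zero, hs, Real.sqrt_div_self']
  · simp [mulVec_dftMatrix_two_conj_one, hd, Real.sqrt_div_self']

lemma mulVec_dftMatrix_two_conj_conj {ξ : ZMod 2 → ℂ} (h0 : ‖ξ 0‖ = 1) (h1 : ‖ξ 1‖ = 1) :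
    (dftMatrix 2 * diagonal ξ * (dftMatrix 2)⁻¹) *ᵥ
      (fun j => starRingEnd ℂ (if j = 0 then ξ 0 + ξ 1 else ξ 0 - ξ 1)) = Pi.single 0 2 := by
  have hunit : ξ 0 * starRingEnd ℂ (ξ 0) = 1 ∧ ξ 1 * starRingEnd ℂ (ξ 1) = 1 := by
    simp [Complex.mul_conj, Complex.normSq_eq_norm_sq, h0, h1]
  funext j
  rcases zmod_two_cases j with rfl | rfl
  · rw [mulVec_dftMatrix_two_conj_zero]
    simp only [if_true, one_ne_zero, if_false, map_add, map_sub, Pi.single_eq_same]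
    linear_combination hunit.1 + hunit.2
  · rw [mulVec_dftMatrix_two_conj_one]
    simp only [if_true, one_ne_zero, if_false, map_add, map_sub, Pi.single_apply]
    linear_combination hunit.1 - hunit.2

lemma FpNorm_two_eq {p : ℝ} (hp : 0 < p) {ξ : ZMod 2 → ℂ} (h0 : ‖ξ 0‖ = 1) (h1 : ‖ξ 1‖ = 1)
    (hs : ‖ξ 0 + ξ 1‖ = √2) (hd : ‖ξ 0 - ξ 1‖ = √2) :
    FpNorm 2 p ξ = 2 ^ |1 / p - 1 / 2| := by
  have hle (v : ZMod 2 → ℂ) := pNorm_le_two_rpow_mul_of_sq_norm_add_eq hp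
    (sq_norm_add_sq_norm_mulVec_dftMatrix_two_conj h0 h1 v)
  rcases le_total p 2 with hp2 | hp2
  · have he : pNorm p (Pi.single (0 : ZMod 2) 1) = 1 := by simp [pNorm_single_zero hp]
    refine opNormLp_eq_of_le_of_le (by positivity) hle (he ▸ one_pos) ?_
    rw [he, pNorm_mulVec_dftMatrix_two_conj_single hp hs hd, mul_one,
      abs_of_nonneg (sub_nonneg.2 (one_div_le_one_div_of_le hp hp2))]
  · set v : ZMod 2 → ℂ := fun j => starRingEnd ℂ (if j = 0 then ξ 0 + ξ 1 else ξ 0 - ξ 1)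
    have hv : pNorm p v = 2 ^ (1 / p) * √2 := by
      refine pNorm_of_norm_eq hp (by positivity) ?_ ?_
      · simp only [v, if_true, Complex.norm_conj, hs]
      · simp only [v, one_ne_zero, if_false, Complex.norm_conj, hd]
    refine opNormLp_eq_of_le_of_le (by positivity) hle (by rw [hv]; positivity) ?_
    rw [hv, mulVec_dftMatrix_two_conj_conj h0 h1, pNorm_single_zero hp, Complex.norm_two,
      abs_of_nonpos (sub_nonpos.2 (one_div_le_one_div_of_le two_pos hp2)), neg_sub, ← mul_assoc,
      ← Real.rpow_add two_pos, sub_add_cancel, ← Real.sqrt_eq_rpow,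
      Real.mul_self_sqrt zero_le_two]

lemma algEquiv_zmod_two_eq_self_or_eq_swap {K : Type*} [CommRing K] [IsDomain K]
    (φ : (ZMod 2 → K) ≃ₐ[K] (ZMod 2 → K)) :
    (∀ ξ, φ ξ = ξ) ∨ ∀ ξ, φ ξ = fun j => ξ (j + 1) := by
  set e : ZMod 2 → K := Pi.single 0 1
  have he : e * e = e := by
    funext j; rcases zmod_two_cases j with rfl | rfl <;> simp [e]
  have hcoord (j : ZMod 2) : φ e j = 0 ∨ φ e j = 1 :=
    IsIdempotentElem.iff_eq_zero_or_one.1 (congrFun (show φ e * φ e = φ e by rw [← map_mul, he]) j)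
  have he0 : φ e ≠ 0 := fun h => by
    simpa [e] using congrFun (φ.injective (h.trans (map_zero φ).symm)) 0
  have he1 : φ e ≠ 1 := fun h => by
    simpa [e] using congrFun (φ.injective (h.trans (map_one φ).symm)) 1
  have hφ (ξ : ZMod 2 → K) : φ ξ = ξ 1 • 1 + (ξ 0 - ξ 1) • φ e := by
    have hξ : ξ = ξ 1 • 1 + (ξ 0 - ξ 1) • e := by
      funext j; rcases zmod_two_cases j with rfl | rfl <;> simp [e]
    conv_lhs => rw [hξ]
    rw [map_add, map_smul, map_smul, map_one]
  rcases hcoord 0 with h0 | h0 <;> rcases hcoord 1 with h1 | h1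
  · exact absurd (funext fun j => by rcases zmod_two_cases j with rfl | rfl <;> simp [h0, h1]) he0
  · right; intro ξ; funext j
    rcases zmod_two_cases j with rfl | rfl <;> rw [hφ] <;> simp [h0, h1, CharTwo.add_self_eq_zero]
  · left; intro ξ; funext j
    rcases zmod_two_cases j with rfl | rfl <;> rw [hφ] <;> simp [h0, h1]
  · exact absurd (funext fun j => by rcases zmod_two_cases j with rfl | rfl <;> simp [h0, h1]) he1

/-- If there is an isometric algebra isomorphism between `ℂ²` with the
`F^p(ℤ_2)`-norm and `ℂ²` with the `F^q(ℤ_2)`-norm, then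
`|1/p − 1/2| = |1/q − 1/2|`. -/
theorem stmt10 (p q : ℝ) (hp : 1 ≤ p) (hq : 1 ≤ q)
    (φ : (ZMod 2 → ℂ) ≃ₐ[ℂ] (ZMod 2 → ℂ))
    (hiso : ∀ ξ : ZMod 2 → ℂ, FpNorm 2 q (φ ξ) = FpNorm 2 p ξ) :
    |1 / p - 1 / 2| = |1 / q - 1 / 2| := by
  set ξ : ZMod 2 → ℂ := fun j => if j = 0 then 1 else Complex.I
  have hplus : ‖1 + Complex.I‖ = √2 := by
    simpa [one_add_one_eq_two] using Complex.norm_add_mul_I 1 1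
  have hminus : ‖1 - Complex.I‖ = √2 := by
    simpa [sub_eq_add_neg, one_add_one_eq_two] using Complex.norm_add_mul_I 1 (-1)
  have hξ {r : ℝ} (hr : 0 < r) : FpNorm 2 r ξ = 2 ^ |1 / r - 1 / 2| :=
    FpNorm_two_eq hr (by simp [ξ]) (by simp [ξ]) hplus hminus
  have hξswap {r : ℝ} (hr : 0 < r) : FpNorm 2 r (fun j => ξ (j + 1)) = 2 ^ |1 / r - 1 / 2| :=
    FpNorm_two_eq hr (by simp [ξ]) (by simp [ξ, CharTwo.add_self_eq_zero])
      (by simpa [ξ, CharTwo.add_self_eq_zero, add_comm] using hplus)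
      (by simpa [ξ, CharTwo.add_self_eq_zero, norm_sub_rev] using hminus)
  have h2 : (2 : ℝ) ^ |1 / p - 1 / 2| = 2 ^ |1 / q - 1 / 2| := by
    rw [← hξ (by linarith), ← hiso]
    rcases algEquiv_zmod_two_eq_self_or_eq_swap φ with hφ | hφ
    · rw [hφ, hξ (by linarith)]
    · rw [hφ, hξswap (by linarith)]
  exact (Real.rpow_right_inj two_pos (by norm_num)).1 h2
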